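/- Let $F(u_1,u_2)$ be the block-wise jump count and $\beta > 0$, and let $(\bar u_1, \bar u_2)$ be a minimizer of $(w_1,w_2) \mapsto F(w_1,w_2) + \frac{1}{2\beta}(\|u_1 - w_1\|^2 + \|u_2 - w_2\|^2)$. Define $v = ((\bar u_1,\bar u_2) - (u_1,u_2))/\delta$ with $\delta = \|(\bar u_1,\bar u_2) - (u_1,u_2)\|$ if $\delta > 0$, else $v = 0$. Then $\|v\| \le 1$ and $F((u_1,u_2) + t v) \le F(u_1,u_2)$ for all $t \ge 0$. -/

import Mathlib

/-!
The prior decouples: the first block only sees jumps of `u₁` between vertically adjacent pixels,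
the second only jumps of `u₂` between horizontally adjacent ones, so each block of the minimizer
is a Potts proximal point for a graph in which every pixel has at most one incoming and one
outgoing edge. On such graphs a minimizer cannot jump across an edge where the data is constant.
Hence `v`, a multiple of the minimizer minus the data, is constant across every edge where the data
is, and moving the data along `v` creates no new jumps.
-/

/-- Number of vertical (row-direction) jumps of an image. -/
noncomputable def rowJumps (n : ℕ) (w : Fin (n + 1) → Fin (n + 1) → ℝ) : ℕ :=
  (Finset.univ.filter fun p : Fin n × Fin (n + 1) =>
    w p.1.castSucc p.2 ≠ w p.1.succ p.2).card

/-- Number of horizontal (column-direction) jumps of an image. -/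
noncomputable def colJumps (n : ℕ) (w : Fin (n + 1) → Fin (n + 1) → ℝ) : ℕ :=
  (Finset.univ.filter fun p : Fin (n + 1) × Fin n =>
    w p.1 p.2.castSucc ≠ w p.1 p.2.succ).card

/-- The block-wise Potts prior. -/
noncomputable def blockPotts (n : ℕ) (u₁ u₂ : Fin (n + 1) → Fin (n + 1) → ℝ) : ℕ :=
  rowJumps n u₁ + colJumps n u₂

/-- Squared Frobenius norm of an image. -/
def sqNorm (n : ℕ) (w : Fin (n + 1) → Fin (n + 1) → ℝ) : ℝ :=
  ∑ i, ∑ j, (w i j) ^ 2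

open Finset Function

section Potts

variable {ι V : Type*} [Fintype ι]

/-- Edge `k` joins `s k` to `t k`. -/
noncomputable def jumpCount (s t : ι → V) (w : V → ℝ) : ℕ := #{k | w (s k) ≠ w (t k)}

variable {s t : ι → V}

theorem jumpCount_swap (w : V → ℝ) : jumpCount t s w = jumpCount s t w := by
  simp only [jumpCount, ne_comm]

theorem jumpCount_le_of_forall_eq {f w : V → ℝ}
    (h : ∀ k, f (s k) = f (t k) → w (s k) = w (t k)) : jumpCount s t w ≤ jumpCount s t f :=
  card_le_card fun k => by simpa only [mem_filter, mem_univ, true_and] using mt (h k)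

theorem jumpCount_add_smul_sub_le {f g : V → ℝ}
    (h : ∀ k, f (s k) = f (t k) → g (s k) = g (t k)) (c : ℝ) :
    jumpCount s t (f + c • (g - f)) ≤ jumpCount s t f :=
  jumpCount_le_of_forall_eq fun k hk => by simp [hk, h k hk]

/-- The jump on `k₀` disappears, and at most one new jump can appear: on the only edge leaving
`t k₀`. -/
theorem jumpCount_update_le [DecidableEq ι] [DecidableEq V] (hs : Injective s)
    (ht : Injective t) {g : V → ℝ} {k₀ : ι} (hk₀ : g (s k₀) ≠ g (t k₀)) :
    jumpCount s t (update g (t k₀) (g (s k₀))) ≤ jumpCount s t g := by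
  set g' := update g (t k₀) (g (s k₀))
  have hst : s k₀ ≠ t k₀ := fun h => hk₀ (congrArg g h)
  have hsub : ({k | g' (s k) ≠ g' (t k)} : Finset ι) ⊆
      ({k | g (s k) ≠ g (t k)} : Finset ι).erase k₀ ∪ ({k | s k = t k₀} : Finset ι) := by
    intro k hk
    simp only [mem_filter, mem_univ, true_and, mem_union, mem_erase] at hk ⊢
    by_cases hsk : s k = t k₀
    · exact Or.inr hsk
    by_cases htk : t k = t k₀
    · obtain rfl := ht htk
      simp [g', hst] at hk
    · simp only [g', update_of_ne hsk, update_of_ne htk] at hk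
      exact Or.inl ⟨fun h => htk (h ▸ rfl), hk⟩
  have hleaving : #{k | s k = t k₀} ≤ 1 :=
    card_le_one.2 fun a ha b hb => hs (by simp_all)
  have hk₀mem : k₀ ∈ ({k | g (s k) ≠ g (t k)} : Finset ι) := by simpa using hk₀
  calc #{k | g' (s k) ≠ g' (t k)}
      ≤ #(({k | g (s k) ≠ g (t k)} : Finset ι).erase k₀) + #{k | s k = t k₀} :=
        (card_le_card hsub).trans (card_union_le _ _)
    _ ≤ #{k | g (s k) ≠ g (t k)} := by
        rw [card_erase_of_mem hk₀mem]
        have := card_pos.2 ⟨k₀, hk₀mem⟩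
        omega

variable [Fintype V]

def IsPottsMinimizer (s t : ι → V) (γ : ℝ) (f g : V → ℝ) : Prop :=
  ∀ w : V → ℝ, (jumpCount s t g : ℝ) + γ * ∑ v, (f v - g v) ^ 2 ≤
    jumpCount s t w + γ * ∑ v, (f v - w v) ^ 2

theorem sum_sq_sub_update [DecidableEq V] (f g : V → ℝ) (q : V) (x : ℝ) :
    ∑ v, (f v - update g q x v) ^ 2 =
      ∑ v, (f v - g v) ^ 2 + ((f q - x) ^ 2 - (f q - g q) ^ 2) := by
  rw [← sub_eq_iff_eq_add', ← sum_sub_distrib,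
    sum_eq_single q (fun v _ hv => by simp [update_of_ne hv]) (by simp)]
  simp

theorem sum_sub_eq_zero_of_forall_sum_sq_le {α : Type*} {S : Finset α} {f : α → ℝ} {a : ℝ}
    (h : ∀ x, ∑ v ∈ S, (f v - a) ^ 2 ≤ ∑ v ∈ S, (f v - x) ^ 2) : ∑ v ∈ S, (f v - a) = 0 := by
  set d := ∑ v ∈ S, (f v - a)
  set m : ℝ := (#S : ℝ)
  have hexpand : ∀ x, ∑ v ∈ S, (f v - x) ^ 2 =
      ∑ v ∈ S, (f v - a) ^ 2 - 2 * (x - a) * d + m * (x - a) ^ 2 := by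
    intro x
    simp only [d, m, mul_sum, ← nsmul_eq_mul, ← sum_const, ← sum_sub_distrib, ← sum_add_distrib]
    exact sum_congr rfl fun v _ => by ring
  have hm : 0 ≤ m := Nat.cast_nonneg _
  obtain ⟨ε, hε⟩ : ∃ ε, d = ε * (m + 1) := ⟨d / (m + 1), by field_simp⟩
  have hx := h (a + ε)
  rw [hexpand (a + ε), hε] at hx
  have : ε = 0 := by nlinarith [sq_nonneg ε]
  simp [hε, this]

variable {γ : ℝ} {f g : V → ℝ}

theorem IsPottsMinimizer.sum_sq_le (hγ : 0 < γ) (hg : IsPottsMinimizer s t γ f g) {w : V → ℝ}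
    (hw : jumpCount s t w ≤ jumpCount s t g) :
    ∑ v, (f v - g v) ^ 2 ≤ ∑ v, (f v - w v) ^ 2 := by
  have := hg w
  have : (jumpCount s t w : ℝ) ≤ jumpCount s t g := by exact_mod_cast hw
  exact le_of_mul_le_mul_left (by linarith) hγ

/-- Moving a whole level set to another value creates no jumps. -/
theorem IsPottsMinimizer.sum_levelSet_sub_eq_zero (hγ : 0 < γ) (hg : IsPottsMinimizer s t γ f g)
    (a : ℝ) : ∑ v with g v = a, (f v - a) = 0 := by
  refine sum_sub_eq_zero_of_forall_sum_sq_le fun x => ?_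
  set gx : V → ℝ := fun v => if g v = a then x else g v
  have hle := hg.sum_sq_le hγ (w := gx) (jumpCount_le_of_forall_eq fun k hk => by simp [gx, hk])
  have hsplit : ∀ w : V → ℝ, ∑ v, (f v - w v) ^ 2 =
      ∑ v with g v = a, (f v - w v) ^ 2 + ∑ v with g v ≠ a, (f v - w v) ^ 2 := fun w =>
    (sum_filter_add_sum_filter_not _ _ _).symm
  rw [hsplit, hsplit gx] at hle
  have h₁ : ∑ v with g v = a, (f v - g v) ^ 2 = ∑ v with g v = a, (f v - a) ^ 2 :=
    sum_congr rfl fun v hv => by rw [(mem_filter.1 hv).2]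
  have h₂ : ∑ v with g v = a, (f v - gx v) ^ 2 = ∑ v with g v = a, (f v - x) ^ 2 :=
    sum_congr rfl fun v hv => by simp [gx, (mem_filter.1 hv).2]
  have h₃ : ∑ v with g v ≠ a, (f v - gx v) ^ 2 = ∑ v with g v ≠ a, (f v - g v) ^ 2 :=
    sum_congr rfl fun v hv => by simp [gx, (mem_filter.1 hv).2]
  linarith

/-- If `g` jumped across an edge where `f` does not, moving either endpoint to the other's value
would not add jumps; minimality then forces `f` to be equidistant from both values, makes the
first move a minimizer as well, and comparing the level-set means before and after that move
puts `f` at one of the two values, hence at both. -/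
theorem IsPottsMinimizer.eq_of_eq (hs : Injective s) (ht : Injective t) (hγ : 0 < γ)
    (hg : IsPottsMinimizer s t γ f g) {k₀ : ι} (hf : f (s k₀) = f (t k₀)) :
    g (s k₀) = g (t k₀) := by
  classical
  by_contra hne
  set p := s k₀
  set q := t k₀
  have hA := hg.sum_sq_le hγ (jumpCount_update_le hs ht hne)
  have hB := hg.sum_sq_le hγ (w := update g p (g q)) <| by
    rw [← jumpCount_swap, ← jumpCount_swap g]
    exact jumpCount_update_le ht hs (Ne.symm hne)
  rw [sum_sq_sub_update] at hA hB
  have hsq : (f q - g p) ^ 2 = (f q - g q) ^ 2 := by rw [hf] at hB; linarith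
  have hgA : IsPottsMinimizer s t γ f (update g q (g p)) := fun w => by
    have hJ : (jumpCount s t (update g q (g p)) : ℝ) ≤ jumpCount s t g := by
      exact_mod_cast jumpCount_update_le hs ht hne
    rw [sum_sq_sub_update, hsq, sub_self, add_zero]
    linarith [hg w]
  have hlevel : ({v | update g q (g p) v = g p} : Finset V) =
      insert q ({v | g v = g p} : Finset V) := by
    ext v
    by_cases hv : v = q <;> simp [hv, update_of_ne]
  have hmean := hgA.sum_levelSet_sub_eq_zero hγ (g p)
  rw [hlevel, sum_insert (by simpa using Ne.symm hne), hg.sum_levelSet_sub_eq_zero hγ (g p),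
    add_zero, sub_eq_zero] at hmean
  rw [hmean, sub_self, sq, zero_mul, eq_comm, sq_eq_zero_iff, sub_eq_zero] at hsq
  exact hne hsq

end Potts

section Image

variable {n : ℕ}

theorem sqNorm_sub_eq_sum (u w : Fin (n + 1) → Fin (n + 1) → ℝ) :
    sqNorm n (u - w) = ∑ v, (uncurry u v - uncurry w v) ^ 2 :=
  (Fintype.sum_prod_type fun v => (uncurry u v - uncurry w v) ^ 2).symm

theorem sqNorm_nonneg (w : Fin (n + 1) → Fin (n + 1) → ℝ) : 0 ≤ sqNorm n w :=
  sum_nonneg fun _ _ => sum_nonneg fun _ _ => sq_nonneg _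

theorem sqNorm_smul (c : ℝ) (w : Fin (n + 1) → Fin (n + 1) → ℝ) :
    sqNorm n (c • w) = c ^ 2 * sqNorm n w := by
  simp [sqNorm, mul_sum, mul_pow]

theorem isPottsMinimizer_uncurry {ι : Type*} [Fintype ι] {s t : ι → Fin (n + 1) × Fin (n + 1)}
    {J : (Fin (n + 1) → Fin (n + 1) → ℝ) → ℕ} (hJ : ∀ w, J w = jumpCount s t (uncurry w))
    {γ : ℝ} {u ub : Fin (n + 1) → Fin (n + 1) → ℝ}
    (h : ∀ w, (J ub : ℝ) + γ * sqNorm n (u - ub) ≤ J w + γ * sqNorm n (u - w)) :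
    IsPottsMinimizer s t γ (uncurry u) (uncurry ub) := fun w => by
  simpa only [hJ, sqNorm_sub_eq_sum, uncurry_curry] using h (curry w)

theorem rowJumps_eq_jumpCount (w : Fin (n + 1) → Fin (n + 1) → ℝ) :
    rowJumps n w = jumpCount (Prod.map Fin.castSucc id) (Prod.map Fin.succ id) (uncurry w) :=
  rfl

theorem colJumps_eq_jumpCount (w : Fin (n + 1) → Fin (n + 1) → ℝ) :
    colJumps n w = jumpCount (Prod.map id Fin.castSucc) (Prod.map id Fin.succ) (uncurry w) :=
  rfl

theorem inv_sqrt_sq_mul_le_one {S : ℝ} (hS : 0 ≤ S) : (√S)⁻¹ ^ 2 * S ≤ 1 := by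
  rw [inv_pow, Real.sq_sqrt hS]
  exact inv_mul_le_one_of_le₀ le_rfl hS

end Image

theorem blockwise_potts_prox_nonascending (n : ℕ) (β : ℝ) (hβ : 0 < β)
    (u₁ u₂ ub₁ ub₂ : Fin (n + 1) → Fin (n + 1) → ℝ)
    (hmin : ∀ w₁ w₂ : Fin (n + 1) → Fin (n + 1) → ℝ,
      (blockPotts n ub₁ ub₂ : ℝ) +
          1 / (2 * β) * (sqNorm n (u₁ - ub₁) + sqNorm n (u₂ - ub₂)) ≤
        (blockPotts n w₁ w₂ : ℝ) +
          1 / (2 * β) * (sqNorm n (u₁ - w₁) + sqNorm n (u₂ - w₂))) :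
    let δ := Real.sqrt (sqNorm n (ub₁ - u₁) + sqNorm n (ub₂ - u₂))
    let v₁ : Fin (n + 1) → Fin (n + 1) → ℝ :=
      if (ub₁, ub₂) = (u₁, u₂) then 0 else δ⁻¹ • (ub₁ - u₁)
    let v₂ : Fin (n + 1) → Fin (n + 1) → ℝ :=
      if (ub₁, ub₂) = (u₁, u₂) then 0 else δ⁻¹ • (ub₂ - u₂)
    (sqNorm n v₁ + sqNorm n v₂ ≤ 1) ∧
      ∀ t : ℝ, 0 ≤ t →
        blockPotts n (u₁ + t • v₁) (u₂ + t • v₂) ≤ blockPotts n u₁ u₂ := by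
  intro δ v₁ v₂
  have hγ : 0 < 1 / (2 * β) := by positivity
  have hrow : IsPottsMinimizer (Prod.map Fin.castSucc id) (Prod.map Fin.succ id) (1 / (2 * β))
      (uncurry u₁) (uncurry ub₁) := isPottsMinimizer_uncurry rowJumps_eq_jumpCount fun w => by
    have := hmin w ub₂
    simp only [blockPotts, Nat.cast_add] at this
    linarith
  have hcol : IsPottsMinimizer (Prod.map id Fin.castSucc) (Prod.map id Fin.succ) (1 / (2 * β))
      (uncurry u₂) (uncurry ub₂) := isPottsMinimizer_uncurry colJumps_eq_jumpCount fun w => by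
    have := hmin ub₁ w
    simp only [blockPotts, Nat.cast_add] at this
    linarith
  obtain ⟨c, hc, hv₁, hv₂⟩ : ∃ c : ℝ, c ^ 2 * (sqNorm n (ub₁ - u₁) + sqNorm n (ub₂ - u₂)) ≤ 1 ∧
      v₁ = c • (ub₁ - u₁) ∧ v₂ = c • (ub₂ - u₂) := by
    by_cases h : (ub₁, ub₂) = (u₁, u₂)
    · exact ⟨0, by simp, by simp [v₁, h], by simp [v₂, h]⟩
    · exact ⟨δ⁻¹, inv_sqrt_sq_mul_le_one (add_nonneg (sqNorm_nonneg _) (sqNorm_nonneg _)),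
        if_neg h, if_neg h⟩
  refine ⟨by rwa [hv₁, hv₂, sqNorm_smul, sqNorm_smul, ← mul_add], fun τ _ => ?_⟩
  rw [hv₁, hv₂, smul_smul, smul_smul]
  exact add_le_add
    (jumpCount_add_smul_sub_le (fun _ => hrow.eq_of_eq ((Fin.castSucc_injective n).prodMap
      injective_id) ((Fin.succ_injective n).prodMap injective_id) hγ) _)
    (jumpCount_add_smul_sub_le (fun _ => hcol.eq_of_eq (injective_id.prodMap
      (Fin.castSucc_injective n)) (injective_id.prodMap (Fin.succ_injective n)) hγ) _)
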